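/- arXiv:2210.15938 — 3 statements merged into one kernel-verified Lean document; each statement's English description precedes it below -/
import Mathlib

section
/- Let κ be an isotropic, non-increasing-with-distance kernel, i.e. κ(x,x') = k(‖x−x'‖) with k : [0,∞) → (0,∞) non-increasing and k(0) > 0. Fix a test point x and suppose the restricted data set B_ρ(x) = {x' ∈ DS : ‖x−x'‖ ≤ ρ} contains m ≥ 1 points. Then the GP posterior variance conditioned only on the points in B_ρ(x) satisfies σₙ²(x) ≤ k(0) − k(ρ)²/(k(0) + σ²/m), where σ² > 0 is the noise variance. -/
open Matrix

open scoped MatrixOrder in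
/-- Cauchy–Schwarz for the bilinear form of a real PSD matrix. -/
lemma psd_cauchy_schwarz {m : ℕ} {A : Matrix (Fin m) (Fin m) ℝ}
    (hA : A.PosSemidef) (a b : Fin m → ℝ) :
    (a ⬝ᵥ A.mulVec b) ^ 2 ≤ (a ⬝ᵥ A.mulVec a) * (b ⬝ᵥ A.mulVec b) := by
  have hS : (CFC.sqrt A).PosSemidef := Matrix.nonneg_iff_posSemidef.mp (CFC.sqrt_nonneg A)
  have hsq : CFC.sqrt A * CFC.sqrt A = A := CFC.sqrt_mul_sqrt_self A hA.nonneg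
  have key : ∀ u v : Fin m → ℝ, u ⬝ᵥ A.mulVec v =
      ((CFC.sqrt A).mulVec u) ⬝ᵥ ((CFC.sqrt A).mulVec v) := by
    intro u v
    have h1 : u ⬝ᵥ ((CFC.sqrt A) * (CFC.sqrt A)).mulVec v =
        ((CFC.sqrt A).mulVec u) ⬝ᵥ ((CFC.sqrt A).mulVec v) := by
      rw [← Matrix.mulVec_mulVec, Matrix.dotProduct_mulVec]
      congr 1
      have hH : (CFC.sqrt A).IsHermitian := hS.isHermitian
      rw [← Matrix.mulVec_transpose]
      congr 1
    rw [hsq] at h1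
    exact h1
  rw [key a b, key a a, key b b]
  set p := (CFC.sqrt A).mulVec a
  set q := (CFC.sqrt A).mulVec b
  have := Finset.sum_mul_sq_le_sq_mul_sq Finset.univ p q
  simpa [dotProduct, pow_two, mul_comm] using this

/-- Posterior variance bound (Lemma 2): if all `m ≥ 1` conditioning points lie
within distance `ρ` of the test point `x`, then the GP posterior variance at
`x` is bounded by `k(0) - k(ρ)² / (k(0) + σ²/m)`. -/
theorem stmt_4 {d : ℕ} (k : ℝ → ℝ)
    (hk_pos : ∀ r, 0 ≤ r → 0 < k r)
    (hk_anti : AntitoneOn k (Set.Ici (0 : ℝ)))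
    {m : ℕ} (hm : 1 ≤ m)
    (x : EuclideanSpace ℝ (Fin d)) (z : Fin m → EuclideanSpace ℝ (Fin d))
    (ρ : ℝ) (hρ : 0 ≤ ρ) (hz : ∀ i, ‖x - z i‖ ≤ ρ)
    (σ2 : ℝ) (hσ : 0 < σ2)
    (K : Matrix (Fin m) (Fin m) ℝ)
    (hK : K = Matrix.of fun i j => k ‖z i - z j‖)
    (hKpsd : K.PosSemidef)
    (hGram : ((Matrix.of fun i j : Fin (m + 1) =>
        k ‖(Fin.snoc z x : Fin (m+1) → EuclideanSpace ℝ (Fin d)) i -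
           (Fin.snoc z x : Fin (m+1) → EuclideanSpace ℝ (Fin d)) j‖) :
        Matrix (Fin (m+1)) (Fin (m+1)) ℝ).PosSemidef) :
    k 0 - (fun i => k ‖x - z i‖) ⬝ᵥ
        ((K + σ2 • (1 : Matrix (Fin m) (Fin m) ℝ))⁻¹).mulVec
          (fun i => k ‖x - z i‖)
      ≤ k 0 - (k ρ) ^ 2 / (k 0 + σ2 / (m : ℝ)) := by
  have hk0 : 0 < k 0 := hk_pos 0 le_rfl
  have hkρ : 0 < k ρ := hk_pos ρ hρ
  have hmR : (0 : ℝ) < m := by exact_mod_cast hm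
  set v : Fin m → ℝ := fun i => k ‖x - z i‖ with hv
  set A : Matrix (Fin m) (Fin m) ℝ := K + σ2 • (1 : Matrix (Fin m) (Fin m) ℝ) with hA
  -- A is positive definite
  have hI : (σ2 • (1 : Matrix (Fin m) (Fin m) ℝ)).PosDef := by
    refine Matrix.PosDef.of_dotProduct_mulVec_pos ?_ ?_
    · show (σ2 • (1 : Matrix (Fin m) (Fin m) ℝ))ᴴ = _
      simp
    · intro w hw
      have : (star w) ⬝ᵥ (σ2 • (1 : Matrix (Fin m) (Fin m) ℝ)).mulVec w
          = σ2 * (w ⬝ᵥ w) := by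
        simp [Matrix.smul_mulVec, Matrix.one_mulVec, dotProduct_smul]
      rw [this]
      have hww : 0 < w ⬝ᵥ w := by
        have := Matrix.dotProduct_star_self_pos_iff (v := w)
        simp only [star_trivial] at this ⊢
        exact this.mpr hw
      positivity
  have hApd : A.PosDef := Matrix.PosDef.posSemidef_add hKpsd hI
  have hApsd : A.PosSemidef := hApd.posSemidef
  -- norm bound: ∀ w, w ⬝ A w ≤ c * (w ⬝ w), c = m*k0 + σ2
  set c : ℝ := m * k 0 + σ2 with hc
  have hcpos : 0 < c := by positivity
  have hKentry : ∀ i j, |K i j| ≤ k 0 := by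
    intro i j
    rw [hK]
    have h1 : 0 < k ‖z i - z j‖ := hk_pos _ (norm_nonneg _)
    have h2 : k ‖z i - z j‖ ≤ k 0 := hk_anti Set.self_mem_Ici (norm_nonneg _) (norm_nonneg _)
    simp only [Matrix.of_apply]
    rw [abs_of_pos h1]; exact h2
  have hbound : ∀ w : Fin m → ℝ, w ⬝ᵥ A.mulVec w ≤ c * (w ⬝ᵥ w) := by
    intro w
    have hAw : w ⬝ᵥ A.mulVec w = w ⬝ᵥ K.mulVec w + σ2 * (w ⬝ᵥ w) := by
      simp [hA, Matrix.add_mulVec, dotProduct_add, Matrix.smul_mulVec,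
        Matrix.one_mulVec]
    have hKq : w ⬝ᵥ K.mulVec w ≤ k 0 * (∑ i, |w i|) ^ 2 := by
      have : w ⬝ᵥ K.mulVec w = ∑ i, ∑ j, w i * (K i j * w j) := by
        simp [dotProduct, Matrix.mulVec, dotProduct, Finset.mul_sum]
      rw [this]
      have hle : ∑ i, ∑ j, w i * (K i j * w j) ≤ ∑ i, ∑ j, |w i| * (k 0 * |w j|) := by
        apply Finset.sum_le_sum; intro i _
        apply Finset.sum_le_sum; intro j _
        calc w i * (K i j * w j) ≤ |w i * (K i j * w j)| := le_abs_self _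
          _ = |w i| * (|K i j| * |w j|) := by rw [abs_mul, abs_mul]
          _ ≤ |w i| * (k 0 * |w j|) := by
              apply mul_le_mul_of_nonneg_left _ (abs_nonneg _)
              exact mul_le_mul_of_nonneg_right (hKentry i j) (abs_nonneg _)
      refine hle.trans_eq ?_
      rw [pow_two, Finset.sum_mul_sum Finset.univ Finset.univ
        (fun i => |w i|) (fun i => |w i|), Finset.mul_sum]
      apply Finset.sum_congr rfl; intro i _
      rw [Finset.mul_sum]
      apply Finset.sum_congr rfl; intro j _; ring
    have hcs : (∑ i, |w i|) ^ 2 ≤ (m : ℝ) * (w ⬝ᵥ w) := by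
      have := Finset.sum_mul_sq_le_sq_mul_sq Finset.univ (fun i : Fin m => |w i|)
        (fun _ => (1 : ℝ))
      simp only [mul_one, one_pow] at this
      calc (∑ i, |w i|) ^ 2 ≤ (∑ i, |w i| ^ 2) * ∑ _i : Fin m, (1 : ℝ) := this
        _ = (m : ℝ) * (w ⬝ᵥ w) := by
            simp [dotProduct, sq_abs, pow_two, mul_comm]
    calc w ⬝ᵥ A.mulVec w = w ⬝ᵥ K.mulVec w + σ2 * (w ⬝ᵥ w) := hAw
      _ ≤ k 0 * ((m : ℝ) * (w ⬝ᵥ w)) + σ2 * (w ⬝ᵥ w) := by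
          have := mul_le_mul_of_nonneg_left hcs hk0.le
          exact add_le_add (hKq.trans this) le_rfl
      _ = c * (w ⬝ᵥ w) := by ring
  -- key inequality : v ⬝ A⁻¹ v ≥ (v ⬝ v)/c
  have hdet : IsUnit A.det := hApd.det_pos.ne'.isUnit
  have hinv : A * A⁻¹ = 1 := Matrix.mul_nonsing_inv A hdet
  set w : Fin m → ℝ := A⁻¹.mulVec v with hw
  have hAw : A.mulVec w = v := by
    rw [hw, Matrix.mulVec_mulVec, hinv, Matrix.one_mulVec]
  have hvρ : ∀ i, k ρ ≤ v i := by
    intro i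
    exact hk_anti (Set.mem_Ici.mpr (norm_nonneg _)) (Set.mem_Ici.mpr hρ) (hz i)
  have hvv : (m : ℝ) * (k ρ) ^ 2 ≤ v ⬝ᵥ v := by
    have : ∀ i : Fin m, (k ρ) ^ 2 ≤ v i * v i := by
      intro i
      have := hvρ i
      nlinarith [hkρ]
    calc (m : ℝ) * (k ρ) ^ 2 = ∑ _i : Fin m, (k ρ) ^ 2 := by
          simp [Finset.sum_const, nsmul_eq_mul]
      _ ≤ ∑ i, v i * v i := Finset.sum_le_sum fun i _ => this i
      _ = v ⬝ᵥ v := rfl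
  have hvvpos : 0 < v ⬝ᵥ v := lt_of_lt_of_le (by positivity) hvv
  set t : ℝ := v ⬝ᵥ w with ht
  have hcs2 := psd_cauchy_schwarz hApsd v w
  rw [hAw] at hcs2
  have hwv : w ⬝ᵥ v = t := dotProduct_comm w v
  rw [hwv] at hcs2
  have hvAv : v ⬝ᵥ A.mulVec v ≤ c * (v ⬝ᵥ v) := hbound v
  have htpos : 0 ≤ t := by
    have h0 := hApsd.dotProduct_mulVec_nonneg w
    rw [star_trivial, hAw, hwv] at h0
    exact h0
  have hmain : (v ⬝ᵥ v) / c ≤ t := by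
    have h1 : (v ⬝ᵥ v) ^ 2 ≤ c * (v ⬝ᵥ v) * t := by
      calc (v ⬝ᵥ v) ^ 2 ≤ (v ⬝ᵥ A.mulVec v) * t := hcs2
        _ ≤ c * (v ⬝ᵥ v) * t := mul_le_mul_of_nonneg_right hvAv htpos
    rw [div_le_iff₀ hcpos]
    nlinarith
  have hfinal : (k ρ) ^ 2 / (k 0 + σ2 / (m : ℝ)) ≤ t := by
    have heq : (k ρ) ^ 2 / (k 0 + σ2 / (m : ℝ)) = (m : ℝ) * (k ρ) ^ 2 / c := by
      rw [hc]
      field_simp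
    rw [heq]
    calc (m : ℝ) * (k ρ) ^ 2 / c ≤ (v ⬝ᵥ v) / c := by
          gcongr
      _ ≤ t := hmain
  have : v ⬝ᵥ A⁻¹.mulVec v = t := rfl
  linarith [hfinal]
end

section
/- Let κ be a kernel that is Lipschitz in its first argument with constant L_κ (uniformly in the second argument), let x¹,…,xᴺ be training inputs with observations y ∈ ℝᴺ, K the Gram matrix and σ² > 0. Then the posterior mean μ(x) = κ(x)ᵀ(K + σ²I)⁻¹y is Lipschitz continuous with constant L_μ ≤ L_κ·√N·‖(K + σ²I)⁻¹y‖₂. -/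
open Matrix

/-- Lipschitz bound on the GP posterior mean (first inequality of Lemma 3):
`|μ(x) - μ(x')| ≤ Lκ √N ‖(K + σ²I)⁻¹ y‖₂ ‖x - x'‖`. -/
theorem stmt_6 {d N : ℕ}
    (κ : EuclideanSpace ℝ (Fin d) → EuclideanSpace ℝ (Fin d) → ℝ)
    (Lκ : ℝ) (hLκ : 0 ≤ Lκ)
    (hLip : ∀ x x' x'', |κ x x'' - κ x' x''| ≤ Lκ * ‖x - x'‖)
    (xs : Fin N → EuclideanSpace ℝ (Fin d)) (y : Fin N → ℝ)
    (σ2 : ℝ) (hσ : 0 < σ2)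
    (α : Fin N → ℝ)
    (hα : α = (((Matrix.of fun i j => κ (xs i) (xs j)) +
        σ2 • (1 : Matrix (Fin N) (Fin N) ℝ))⁻¹).mulVec y)
    (μ : EuclideanSpace ℝ (Fin d) → ℝ)
    (hμ : ∀ x, μ x = (fun i => κ x (xs i)) ⬝ᵥ α) :
    ∀ x x', |μ x - μ x'| ≤
      Lκ * Real.sqrt N * Real.sqrt (∑ i, (α i) ^ 2) * ‖x - x'‖ := by
  intro x x'
  have hdiff : μ x - μ x' = ∑ i, (κ x (xs i) - κ x' (xs i)) * α i := by
    rw [hμ, hμ]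
    simp [dotProduct, sub_mul, Finset.sum_sub_distrib]
  rw [hdiff]
  calc |∑ i, (κ x (xs i) - κ x' (xs i)) * α i|
      ≤ ∑ i, |(κ x (xs i) - κ x' (xs i)) * α i| := Finset.abs_sum_le_sum_abs _ _
    _ = ∑ i, |κ x (xs i) - κ x' (xs i)| * |α i| := by simp [abs_mul]
    _ ≤ Real.sqrt (∑ i, |κ x (xs i) - κ x' (xs i)| ^ 2) *
        Real.sqrt (∑ i, |α i| ^ 2) := Real.sum_mul_le_sqrt_mul_sqrt _ _ _
    _ ≤ Real.sqrt (∑ _i : Fin N, (Lκ * ‖x - x'‖) ^ 2) * Real.sqrt (∑ i, (α i) ^ 2) := by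
        have h1 : (∑ i, |κ x (xs i) - κ x' (xs i)| ^ 2) ≤
            ∑ _i : Fin N, (Lκ * ‖x - x'‖) ^ 2 := by
          refine Finset.sum_le_sum fun i _ => ?_
          exact pow_le_pow_left₀ (abs_nonneg _) (hLip x x' (xs i)) 2
        have h2 : (∑ i, |α i| ^ 2) = ∑ i, (α i) ^ 2 := by simp [sq_abs]
        rw [h2]
        gcongr
    _ = Lκ * Real.sqrt N * Real.sqrt (∑ i, (α i) ^ 2) * ‖x - x'‖ := by
        rw [Finset.sum_const, Finset.card_univ, Fintype.card_fin, nsmul_eq_mul,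
          Real.sqrt_mul (by positivity), Real.sqrt_sq (by positivity)]
        ring
end

section
/- Under the assumptions of the previous statement, the posterior variance σₙ²(x) = κ(x,x) − κ(x)ᵀ(K + σ²I)⁻¹κ(x) on a set X where κ is bounded by κ_max = max_{x,x'∈X} |κ(x,x')|, and with κ additionally Lipschitz in each argument with constant L_κ, is Lipschitz on X with constant L_{σ²} ≤ 2L_κ(1 + N‖(K + σ²I)⁻¹‖·κ_max). -/
open Matrix

lemma cs_abs {N : ℕ} (f g : Fin N → ℝ) :
    |∑ i, f i * g i| ≤ Real.sqrt (∑ i, f i ^ 2) * Real.sqrt (∑ i, g i ^ 2) := by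
  have h := Finset.sum_mul_sq_le_sq_mul_sq Finset.univ f g
  have hf : (0:ℝ) ≤ ∑ i, f i ^ 2 := Finset.sum_nonneg fun i _ => sq_nonneg _
  calc |∑ i, f i * g i| = Real.sqrt ((∑ i, f i * g i) ^ 2) := (Real.sqrt_sq_eq_abs _).symm
    _ ≤ Real.sqrt ((∑ i, f i ^ 2) * ∑ i, g i ^ 2) := Real.sqrt_le_sqrt h
    _ = Real.sqrt (∑ i, f i ^ 2) * Real.sqrt (∑ i, g i ^ 2) := Real.sqrt_mul hf _

lemma sqrt_sum_le {N : ℕ} (f : Fin N → ℝ) (c : ℝ) (hc : 0 ≤ c)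
    (h : ∀ i, |f i| ≤ c) :
    Real.sqrt (∑ i, f i ^ 2) ≤ Real.sqrt N * c := by
  have h1 : (∑ i, f i ^ 2) ≤ (N : ℝ) * c ^ 2 := by
    calc (∑ i, f i ^ 2) ≤ ∑ _i : Fin N, c ^ 2 :=
          Finset.sum_le_sum fun i _ => by
            have := h i
            nlinarith [sq_abs (f i), abs_nonneg (f i)]
      _ = (N : ℝ) * c ^ 2 := by simp [mul_comm]
  calc Real.sqrt (∑ i, f i ^ 2) ≤ Real.sqrt ((N : ℝ) * c ^ 2) := Real.sqrt_le_sqrt h1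
    _ = Real.sqrt N * c := by
        rw [Real.sqrt_mul (Nat.cast_nonneg N), Real.sqrt_sq hc]

/-- Lipschitz bound on the GP posterior variance (second inequality of
Lemma 3): on a set `X` where `|κ| ≤ κmax`, the posterior variance is
Lipschitz with constant `2 Lκ (1 + N ‖(K + σ²I)⁻¹‖ κmax)`, where the matrix
norm is the spectral (Euclidean operator) norm. -/
theorem stmt_7 {d N : ℕ}
    (κ : EuclideanSpace ℝ (Fin d) → EuclideanSpace ℝ (Fin d) → ℝ)
    (X : Set (EuclideanSpace ℝ (Fin d)))
    (Lκ : ℝ) (hLκ : 0 ≤ Lκ)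
    (hLip1 : ∀ x x' x'', |κ x x'' - κ x' x''| ≤ Lκ * ‖x - x'‖)
    (hLip2 : ∀ x x' x'', |κ x'' x - κ x'' x'| ≤ Lκ * ‖x - x'‖)
    (κmax : ℝ) (hκmax : ∀ x ∈ X, ∀ x' ∈ X, |κ x x'| ≤ κmax)
    (xs : Fin N → EuclideanSpace ℝ (Fin d)) (hxs : ∀ i, xs i ∈ X)
    (σ2 : ℝ) (hσ : 0 < σ2)
    (A : Matrix (Fin N) (Fin N) ℝ)
    (hA : A = ((Matrix.of fun i j => κ (xs i) (xs j)) +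
        σ2 • (1 : Matrix (Fin N) (Fin N) ℝ))⁻¹)
    (Anorm : ℝ)
    (hAnorm : ∀ v : Fin N → ℝ,
      Real.sqrt (∑ i, (A.mulVec v i) ^ 2) ≤ Anorm * Real.sqrt (∑ i, (v i) ^ 2))
    (σn2 : EuclideanSpace ℝ (Fin d) → ℝ)
    (hσn2 : ∀ x, σn2 x = κ x x -
      (fun i => κ x (xs i)) ⬝ᵥ A.mulVec (fun i => κ x (xs i))) :
    ∀ x ∈ X, ∀ x' ∈ X,
      |σn2 x - σn2 x'| ≤ 2 * Lκ * (1 + N * Anorm * κmax) * ‖x - x'‖ := by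
  intro x hx x' hx'
  have hd : (0:ℝ) ≤ ‖x - x'‖ := norm_nonneg _
  have hκm : 0 ≤ κmax := le_trans (abs_nonneg _) (hκmax x hx x hx)
  -- diagonal term
  have hdiag : |κ x x - κ x' x'| ≤ 2 * Lκ * ‖x - x'‖ := by
    calc |κ x x - κ x' x'| ≤ |κ x x - κ x' x| + |κ x' x - κ x' x'| := abs_sub_le _ _ _
      _ ≤ Lκ * ‖x - x'‖ + Lκ * ‖x - x'‖ := add_le_add (hLip1 x x' x) (hLip2 x x' x')
      _ = 2 * Lκ * ‖x - x'‖ := by ring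
  set k : Fin N → ℝ := fun i => κ x (xs i) with hk
  set k' : Fin N → ℝ := fun i => κ x' (xs i) with hk'
  rcases Nat.eq_zero_or_pos N with hN | hN
  · subst hN
    have h0 : k ⬝ᵥ A.mulVec k = 0 := by simp [dotProduct]
    have h0' : k' ⬝ᵥ A.mulVec k' = 0 := by simp [dotProduct]
    rw [hσn2, hσn2, ← hk, ← hk', h0, h0']
    simpa using hdiag
  -- Anorm nonneg
  have hAn : 0 ≤ Anorm := by
    have h := hAnorm (fun _ => 1)
    have hs : Real.sqrt (∑ _i : Fin N, ((1:ℝ)) ^ 2) = Real.sqrt N := by simp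
    have hpos : 0 < Real.sqrt N := Real.sqrt_pos.mpr (by exact_mod_cast hN)
    nlinarith [Real.sqrt_nonneg (∑ i, (A.mulVec (fun _ => 1) i) ^ 2)]
  -- norm bounds
  have hkb : Real.sqrt (∑ i, k i ^ 2) ≤ Real.sqrt N * κmax :=
    sqrt_sum_le _ _ hκm fun i => hκmax x hx (xs i) (hxs i)
  have hk'b : Real.sqrt (∑ i, k' i ^ 2) ≤ Real.sqrt N * κmax :=
    sqrt_sum_le _ _ hκm fun i => hκmax x' hx' (xs i) (hxs i)
  have hdiffb : Real.sqrt (∑ i, (k i - k' i) ^ 2) ≤ Real.sqrt N * (Lκ * ‖x - x'‖) :=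
    sqrt_sum_le _ _ (by positivity) fun i => hLip1 x x' (xs i)
  -- quadratic form bound
  have hQ : ∀ v w : Fin N → ℝ, |v ⬝ᵥ A.mulVec w| ≤
      Real.sqrt (∑ i, v i ^ 2) * (Anorm * Real.sqrt (∑ i, w i ^ 2)) := by
    intro v w
    calc |v ⬝ᵥ A.mulVec w| ≤ Real.sqrt (∑ i, v i ^ 2) * Real.sqrt (∑ i, (A.mulVec w i) ^ 2) :=
          cs_abs v (A.mulVec w)
      _ ≤ Real.sqrt (∑ i, v i ^ 2) * (Anorm * Real.sqrt (∑ i, w i ^ 2)) :=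
          mul_le_mul_of_nonneg_left (hAnorm w) (Real.sqrt_nonneg _)
  have hsplit : k ⬝ᵥ A.mulVec k - k' ⬝ᵥ A.mulVec k' =
      k ⬝ᵥ A.mulVec (k - k') + (k - k') ⬝ᵥ A.mulVec k' := by
    simp only [Matrix.mulVec_sub, dotProduct_sub, sub_dotProduct]
    ring
  have h1 := hQ k (k - k')
  have h2 := hQ (k - k') k'
  have hsub : ∀ i, (k - k') i = k i - k' i := fun i => rfl
  simp only [hsub] at h1 h2
  have hNN : Real.sqrt N * Real.sqrt N = (N : ℝ) := Real.mul_self_sqrt (Nat.cast_nonneg N)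
  have hquad : |k ⬝ᵥ A.mulVec k - k' ⬝ᵥ A.mulVec k'| ≤
      2 * ((N : ℝ) * Anorm * κmax) * (Lκ * ‖x - x'‖) := by
    rw [hsplit]
    have hb1 : |k ⬝ᵥ A.mulVec (k - k')| ≤ (N : ℝ) * Anorm * κmax * (Lκ * ‖x - x'‖) := by
      calc |k ⬝ᵥ A.mulVec (k - k')| ≤
            Real.sqrt (∑ i, k i ^ 2) * (Anorm * Real.sqrt (∑ i, (k i - k' i) ^ 2)) := h1
        _ ≤ (Real.sqrt N * κmax) * (Anorm * (Real.sqrt N * (Lκ * ‖x - x'‖))) := by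
            apply mul_le_mul hkb (mul_le_mul_of_nonneg_left hdiffb hAn)
              (by positivity) (by positivity)
        _ = (N : ℝ) * Anorm * κmax * (Lκ * ‖x - x'‖) := by
            linear_combination (κmax * Anorm * Lκ * ‖x - x'‖) * hNN
    have hb2 : |(k - k') ⬝ᵥ A.mulVec k'| ≤ (N : ℝ) * Anorm * κmax * (Lκ * ‖x - x'‖) := by
      calc |(k - k') ⬝ᵥ A.mulVec k'| ≤
            Real.sqrt (∑ i, (k i - k' i) ^ 2) * (Anorm * Real.sqrt (∑ i, k' i ^ 2)) := h2
        _ ≤ (Real.sqrt N * (Lκ * ‖x - x'‖)) * (Anorm * (Real.sqrt N * κmax)) := by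
            apply mul_le_mul hdiffb (mul_le_mul_of_nonneg_left hk'b hAn)
              (by positivity) (by positivity)
        _ = (N : ℝ) * Anorm * κmax * (Lκ * ‖x - x'‖) := by
            linear_combination (κmax * Anorm * Lκ * ‖x - x'‖) * hNN
    calc |k ⬝ᵥ A.mulVec (k - k') + (k - k') ⬝ᵥ A.mulVec k'| ≤
          |k ⬝ᵥ A.mulVec (k - k')| + |(k - k') ⬝ᵥ A.mulVec k'| := abs_add_le _ _
      _ ≤ 2 * ((N : ℝ) * Anorm * κmax) * (Lκ * ‖x - x'‖) := by linarith
  rw [hσn2, hσn2, ← hk, ← hk']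
  have habs : |(κ x x - k ⬝ᵥ A.mulVec k) - (κ x' x' - k' ⬝ᵥ A.mulVec k')| ≤
      |κ x x - κ x' x'| + |k ⬝ᵥ A.mulVec k - k' ⬝ᵥ A.mulVec k'| := by
    have : (κ x x - k ⬝ᵥ A.mulVec k) - (κ x' x' - k' ⬝ᵥ A.mulVec k') =
        (κ x x - κ x' x') - (k ⬝ᵥ A.mulVec k - k' ⬝ᵥ A.mulVec k') := by ring
    rw [this]
    exact abs_sub _ _
  calc |(κ x x - k ⬝ᵥ A.mulVec k) - (κ x' x' - k' ⬝ᵥ A.mulVec k')| ≤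
        |κ x x - κ x' x'| + |k ⬝ᵥ A.mulVec k - k' ⬝ᵥ A.mulVec k'| := habs
    _ ≤ 2 * Lκ * ‖x - x'‖ + 2 * ((N : ℝ) * Anorm * κmax) * (Lκ * ‖x - x'‖) := add_le_add hdiag hquad
    _ = 2 * Lκ * (1 + N * Anorm * κmax) * ‖x - x'‖ := by ring
end
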